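/- arXiv:2002.11021 — 2 statements merged into one kernel-verified Lean document; each statement's English description precedes it below -/
import Mathlib

section
/- Let α, B, w, t be real numbers with B > 0 and t ≠ 0. Define z = exp(t·w + α) / (exp(t·w + α) + B) and z̃ = exp(−t·w + α) / (exp(−t·w + α) + B). Then (1/z̃ − 1) / (1/z − 1) = exp(2·t·w), and w = (1/(2t)) · ln((1/z̃ − 1) / (1/z − 1)). -/
open Real

/- Writing `z = e / (e + B)`, the odds `1/z - 1 = B / e` are proportional to `1 / e`, so in the
ratio of faulted to correct odds `B` and the shared contribution `α` cancel, leaving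
`exp (t w + α) / exp (-(t w) + α) = exp (2 t w)`; taking logarithms recovers `w` since `t ≠ 0`. -/

theorem one_div_div_add_sub_one {K : Type*} [DivisionRing K] {e : K} (B : K) (he : e ≠ 0) :
    1 / (e / (e + B)) - 1 = B / e := by
  rw [one_div_div, add_div, div_self he, add_sub_cancel_left]

theorem softmax_odds_ratio_neg (α x : ℝ) {B : ℝ} (hB : B ≠ 0) :
    (1 / (exp (-x + α) / (exp (-x + α) + B)) - 1) /
      (1 / (exp (x + α) / (exp (x + α) + B)) - 1) = exp (2 * x) := by
  rw [one_div_div_add_sub_one B (exp_ne_zero _), one_div_div_add_sub_one B (exp_ne_zero _),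
    div_div_div_cancel_left' _ _ hB, ← exp_sub]
  ring_nf

/-- SNIFF weight recovery identity: with `z = exp (t*w + α) / (exp (t*w + α) + B)`
and `z̃ = exp (-(t*w) + α) / (exp (-(t*w) + α) + B)` for `B > 0` and `t ≠ 0`,
`(1/z̃ - 1) / (1/z - 1) = exp (2*t*w)` and
`w = (1/(2*t)) * log ((1/z̃ - 1) / (1/z - 1))`. -/
theorem sniff_weight_ratio_and_recovery (α B w t : ℝ) (hB : 0 < B) (ht : t ≠ 0) :
    (1 / (exp (-(t * w) + α) / (exp (-(t * w) + α) + B)) - 1) /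
      (1 / (exp (t * w + α) / (exp (t * w + α) + B)) - 1) = exp (2 * t * w) ∧
    w = (1 / (2 * t)) * Real.log ((1 / (exp (-(t * w) + α) / (exp (-(t * w) + α) + B)) - 1) /
          (1 / (exp (t * w + α) / (exp (t * w + α) + B)) - 1)) := by
  have ratio := softmax_odds_ratio_neg α (t * w) hB.ne'
  rw [← mul_assoc] at ratio
  refine ⟨ratio, ?_⟩
  rw [ratio, log_exp]
  field_simp
end

section
/- (Theorem 2, weight recovery.) Let n, m ∈ ℕ with m ≥ 2, let I : Fin n → ℝ be the input to the last layer, let W : Fin n → Fin m → ℝ be the weight matrix and b : Fin m → ℝ the bias vector. For each j define y_j = b_j + Σ_{i=1}^{n} I_i · W_{i,j} and the softmax output z_j = exp(y_j) / Σ_{j'} exp(y_{j'}). Fix i₀ and j₀ and assume I_{i₀} ≠ 0 (the input is non-vanishing for i₀). Define the faulted pre-activations ỹ by ỹ_{j₀} = y_{j₀} − 2·I_{i₀}·W_{i₀,j₀} and ỹ_j = y_j for j ≠ j₀, with faulted output z̃_{j₀} = exp(ỹ_{j₀}) / Σ_{j'} exp(ỹ_{j'}). Then W_{i₀,j₀}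 = (1/(2·I_{i₀})) · ln((1/z̃_{j₀} − 1) / (1/z_{j₀} − 1)). -/
open Real Finset

/-!
Writing `z = exp y_{j₀} / (exp y_{j₀} + T)` with `T = ∑_{j ≠ j₀} exp y_j`, the inverse odds
`1/z - 1 = T / exp y_{j₀}` depend on `y_{j₀}` only through `exp (-y_{j₀})`, and the fault leaves `T`
unchanged. Hence the ratio of faulted to correct inverse odds is `exp (y_{j₀} - ỹ_{j₀}) =
exp (2 I_{i₀} W_{i₀,j₀})`, and taking logarithms recovers the weight. `T > 0` needs a second class.
-/

noncomputable def softmax {ι : Type*} [Fintype ι] (x : ι → ℝ) (j : ι) : ℝ :=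
  exp (x j) / ∑ k, exp (x k)

section Softmax

variable {ι : Type*} [Fintype ι] [DecidableEq ι]

theorem one_div_softmax_sub_one (x : ι → ℝ) (j : ι) :
    1 / softmax x j - 1 = (∑ k ∈ univ.erase j, exp (x k)) / exp (x j) := by
  rw [softmax, ← add_sum_erase univ _ (mem_univ j)]
  field_simp
  ring

theorem sum_erase_exp_pos [Nontrivial ι] (x : ι → ℝ) (j : ι) :
    0 < ∑ k ∈ univ.erase j, exp (x k) := by
  obtain ⟨k, hk⟩ := exists_ne j
  exact sum_pos (fun _ _ ↦ exp_pos _) ⟨k, mem_erase.2 ⟨hk, mem_univ k⟩⟩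

theorem softmax_update_odds_ratio [Nontrivial ι] (x : ι → ℝ) (j : ι) (v : ℝ) :
    (1 / softmax (Function.update x j v) j - 1) / (1 / softmax x j - 1) = exp (x j - v) := by
  have h_rest : ∑ k ∈ univ.erase j, exp (Function.update x j v k) =
      ∑ k ∈ univ.erase j, exp (x k) :=
    sum_congr rfl fun k hk ↦ by rw [Function.update_of_ne (ne_of_mem_erase hk)]
  have h_pos := sum_erase_exp_pos x j
  rw [one_div_softmax_sub_one, one_div_softmax_sub_one, h_rest, Function.update_self, exp_sub]
  field_simp

end Softmax

theorem sniff_weight_recovery_last_layer_general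
    (n m : ℕ) (hm : 2 ≤ m)
    (I : Fin n → ℝ) (W : Fin n → Fin m → ℝ)
    (i₀ : Fin n) (j₀ : Fin m) (hI : I i₀ ≠ 0)
    (y : Fin m → ℝ)
    (yf : Fin m → ℝ)
    (hyf : yf = Function.update y j₀ (y j₀ - 2 * I i₀ * W i₀ j₀))
    (z zf : ℝ)
    (hz : z = exp (y j₀) / ∑ j' : Fin m, exp (y j'))
    (hzf : zf = exp (yf j₀) / ∑ j' : Fin m, exp (yf j')) :
    W i₀ j₀ = (1 / (2 * I i₀)) * Real.log ((1 / zf - 1) / (1 / z - 1)) := by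
  have : Nontrivial (Fin m) := Fin.nontrivial_iff_two_le.2 hm
  have h_ratio : (1 / zf - 1) / (1 / z - 1) = exp (2 * I i₀ * W i₀ j₀) := by
    rw [show zf = softmax yf j₀ from hzf, show z = softmax y j₀ from hz, hyf,
      softmax_update_odds_ratio]
    ring_nf
  rw [h_ratio, log_exp]
  field_simp

/-- Theorem 2 (weight recovery by SNIFF): the last layer computes pre-activations
`y j = b j + ∑ i, I i * W i j` followed by a softmax; a sign bit flip fault on
the product `I i₀ * W i₀ j₀` replaces `y j₀` by `y j₀ - 2 * I i₀ * W i₀ j₀`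
(all other coordinates unchanged). If `I i₀ ≠ 0` (non-vanishing input), then from
the correct output `z` and faulted output `z̃` at coordinate `j₀`, the targeted
weight is recovered as `W i₀ j₀ = (1/(2 * I i₀)) * log ((1/z̃ - 1) / (1/z - 1))`. -/
theorem sniff_weight_recovery_last_layer
    (n m : ℕ) (hm : 2 ≤ m)
    (I : Fin n → ℝ) (W : Fin n → Fin m → ℝ) (b : Fin m → ℝ)
    (i₀ : Fin n) (j₀ : Fin m) (hI : I i₀ ≠ 0)
    (y : Fin m → ℝ) (hy : ∀ j, y j = b j + ∑ i, I i * W i j)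
    (yf : Fin m → ℝ)
    (hyf : yf = Function.update y j₀ (y j₀ - 2 * I i₀ * W i₀ j₀))
    (z zf : ℝ)
    (hz : z = exp (y j₀) / ∑ j' : Fin m, exp (y j'))
    (hzf : zf = exp (yf j₀) / ∑ j' : Fin m, exp (yf j')) :
    W i₀ j₀ = (1 / (2 * I i₀)) * Real.log ((1 / zf - 1) / (1 / z - 1)) :=
  sniff_weight_recovery_last_layer_general n m hm I W i₀ j₀ hI y yf hyf z zf hz hzf
end
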